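/- Let w be any complex root of the polynomial X^7 + 5X^6 + 2X^3 − X^2 + X + 11. Then the set of irreducible λ-quiddities over ⟨w⟩ is exactly {(0, kw, 0, −kw) : k ∈ ℤ} ∪ {(kw, 0, −kw, 0) : k ∈ ℤ}. -/

import Mathlib

open Matrix Polynomial

noncomputable section

/-- The elementary matrix [[a, -1], [1, 0]]. -/
def matE (a : ℂ) : Matrix (Fin 2) (Fin 2) ℂ := !![a, -1; 1, 0]

/-- M_n(a_1, …, a_n) = matE a_n * matE a_{n-1} * ⋯ * matE a_1, for the list [a_1, …, a_n]. -/
def Mlist (l : List ℂ) : Matrix (Fin 2) (Fin 2) ℂ := (l.reverse.map matE).prod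

/-- A λ-quiddity over R : a nonempty tuple of elements of R with M_n(a_1,…,a_n) = ±Id. -/
def IsQuiddity (R : Set ℂ) (l : List ℂ) : Prop :=
  l ≠ [] ∧ (∀ x ∈ l, x ∈ R) ∧ (Mlist l = 1 ∨ Mlist l = -1)

/-- (a_1,…,a_n) ⊕ (b_1,…,b_m) := (a_1+b_m, a_2,…,a_{n-1}, a_n+b_1, b_2,…,b_{m-1}). -/
def oplus (a b : List ℂ) : List ℂ :=
  (a.headI + b.getLastD 0) ::
    (a.tail.dropLast ++ (a.getLastD 0 + b.headI) :: b.tail.dropLast)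

/-- b is obtained from a by a cyclic permutation of a or of the reversal of a. -/
def CyclicEquiv (a b : List ℂ) : Prop :=
  (∃ k, b = a.rotate k) ∨ (∃ k, b = a.reverse.rotate k)

/-- A λ-quiddity c over R is reducible if c ∼ (a_1,…,a_m) ⊕ (b_1,…,b_l) with
(a_1,…,a_m) a tuple of elements of R, (b_1,…,b_l) a λ-quiddity over R, m ≥ 3 and l ≥ 3. -/
def ReducibleQuiddity (R : Set ℂ) (c : List ℂ) : Prop :=
  ∃ a b : List ℂ, (∀ x ∈ a, x ∈ R) ∧ IsQuiddity R b ∧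
    3 ≤ a.length ∧ 3 ≤ b.length ∧ CyclicEquiv c (oplus a b)

/-- The irreducible λ-quiddities over R : the λ-quiddities of size ≥ 3 which are not
reducible (those of size < 3, i.e. (0,0), are by convention not irreducible). -/
def IrreducibleQuiddity (R : Set ℂ) (c : List ℂ) : Prop :=
  IsQuiddity R c ∧ 3 ≤ c.length ∧ ¬ ReducibleQuiddity R c

/-- The subgroup ⟨w⟩ = {kw : k ∈ ℤ} of (ℂ, +), as a set. -/
def subgroupGen (w : ℂ) : Set ℂ := {x | ∃ k : ℤ, x = (k : ℂ) * w}

end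

/-!
The polynomial `X^7 + 5X^6 + 2X^3 - X^2 + X + 11` is irreducible over `ℚ`: all its complex roots
have modulus `> 1`, so a monic integer factor of positive degree has constant coefficient of
absolute value `> 1`, while the constant coefficient `11` is prime. It has a real root `v ≤ -2`,
conjugate to `w`. The ℚ-embeddings of `ℚ[X]/(minpoly w)` into `ℂ` sending `X` to `w` and to `v`
are injective, so `M_n(k_1 w, …, k_n w) = ±Id` forces `M_n(k_1 v, …, k_n v) = ±Id`, where every
nonzero entry `k_i v` has modulus `≥ 2`.

Along a tuple of entries of modulus `≥ 2` the first row of `M_n` grows strictly, so it is never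
`±Id`. Hence every λ-quiddity over `⟨w⟩` contains a `0`; it cannot have size 3 (its middle entry
would be `±1`), and one of size 4 has `M_4 = Id` (`M_4 = -Id` needs `a_2 a_3 = 2`), which leaves
exactly the two families. A λ-quiddity of size `≥ 5` containing `0` splits off the summand
`(0, t, 0, -t)`, whereas a size-4 one is irreducible since a summand would have size 3.
-/

def quiddityMatrix {A : Type*} [CommRing A] (l : List A) : Matrix (Fin 2) (Fin 2) A :=
  (l.reverse.map fun a => !![a, -1; 1, 0]).prod

theorem Mlist_eq_quiddityMatrix (l : List ℂ) : Mlist l = quiddityMatrix l := rfl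

theorem RingHom.mapMatrix_quiddityMatrix {A B : Type*} [CommRing A] [CommRing B] (f : A →+* B)
    (l : List A) : f.mapMatrix (quiddityMatrix l) = quiddityMatrix (l.map f) := by
  have hgen (a : A) : f.mapMatrix !![a, -1; 1, 0] = !![f a, -1; 1, 0] := by
    ext i j; fin_cases i <;> fin_cases j <;> simp
  simp [quiddityMatrix, map_list_prod, List.map_reverse, Function.comp_def, hgen]

theorem Mlist_cons (x : ℂ) (l : List ℂ) : Mlist (x :: l) = Mlist l * matE x := by
  simp [Mlist]

theorem Mlist_three (x y z : ℂ) :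
    Mlist [x, y, z] = !![z * (y * x - 1) - x, 1 - z * y; y * x - 1, -y] := by
  simp only [Mlist, List.reverse_cons, List.reverse_nil, List.nil_append, List.cons_append,
    List.map_cons, List.map_nil, List.prod_cons, List.prod_nil, mul_one, matE]
  ext i j
  fin_cases i <;> fin_cases j <;> simp [Matrix.mul_apply, Fin.sum_univ_two] <;> ring

theorem Mlist_four (x y z t : ℂ) :
    Mlist [x, y, z, t] =
      !![(t * z - 1) * (y * x - 1) - t * x, t * (1 - z * y) + y;
        z * (y * x - 1) - x, 1 - z * y] := by
  rw [Mlist_cons, Mlist_three, matE]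
  ext i j
  fin_cases i <;> fin_cases j <;> simp [Matrix.mul_apply, Fin.sum_univ_two] <;> ring

theorem eq_one_or_eq_neg_one_of_Mlist_three {x y z : ℂ}
    (h : Mlist [x, y, z] = 1 ∨ Mlist [x, y, z] = -1) : y = 1 ∨ y = -1 := by
  rw [Mlist_three] at h
  rcases h with h | h <;> have h11 := congrFun (congrFun h 1) 1 <;> simp at h11
  · right; linear_combination -h11
  · left; linear_combination h11

theorem Mlist_four_eq_one_iff {x y z t : ℂ} :
    Mlist [x, y, z, t] = 1 ↔ (x = 0 ∧ z = 0 ∧ t = -y) ∨ (y = 0 ∧ z = -x ∧ t = 0) := by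
  rw [Mlist_four, ← Matrix.ext_iff]
  constructor
  · intro h
    have h10 : z * (y * x - 1) - x = 0 := by simpa using h 1 0
    have h01 : t * (1 - z * y) + y = 0 := by simpa using h 0 1
    have h11 : 1 - z * y = 1 := by simpa using h 1 1
    rcases mul_eq_zero.mp (by linear_combination -h11 : z * y = 0) with rfl | rfl
    · left; exact ⟨by linear_combination -h10, rfl, by linear_combination h01⟩
    · right; exact ⟨rfl, by linear_combination -h10, by linear_combination h01⟩
  · rintro (⟨rfl, rfl, rfl⟩ | ⟨rfl, rfl, rfl⟩) i j <;>
      fin_cases i <;> fin_cases j <;> simp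

theorem mul_eq_two_of_Mlist_four_eq_neg_one {x y z t : ℂ} (h : Mlist [x, y, z, t] = -1) :
    z * y = 2 := by
  rw [Mlist_four] at h
  linear_combination -(by simpa using congrFun (congrFun h 1) 1 : 1 - z * y = -1)

theorem norm_Mlist_zero_one_lt {l : List ℂ} (hl : ∀ x ∈ l, 2 ≤ ‖x‖) :
    ‖Mlist l 0 1‖ < ‖Mlist l 0 0‖ ∧ 1 ≤ ‖Mlist l 0 0‖ := by
  induction l with
  | nil => simp [Mlist]
  | cons x l ih =>
    obtain ⟨hlt, hle⟩ := ih fun y hy => hl y (List.mem_cons_of_mem x hy)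
    have hx : 2 ≤ ‖x‖ := hl x List.mem_cons_self
    set a := Mlist l 0 0
    set b := Mlist l 0 1
    have h00 : Mlist (x :: l) 0 0 = a * x + b := by
      simp [Mlist_cons, Matrix.mul_apply, Fin.sum_univ_two, matE, a, b]
    have h01 : Mlist (x :: l) 0 1 = -a := by
      simp [Mlist_cons, Matrix.mul_apply, Fin.sum_univ_two, matE, a]
    have hgrow : ‖a‖ < ‖a * x + b‖ := calc
      ‖a‖ < ‖a‖ * ‖x‖ - ‖b‖ := by nlinarith
      _ = ‖a * x‖ - ‖-b‖ := by rw [norm_mul, norm_neg]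
      _ ≤ ‖a * x - -b‖ := norm_sub_norm_le _ _
      _ = ‖a * x + b‖ := by rw [sub_neg_eq_add]
    rw [h00, h01, norm_neg]
    exact ⟨hgrow, hle.trans hgrow.le⟩

theorem Mlist_ne_one_of_two_le_norm {l : List ℂ} (hne : l ≠ []) (hl : ∀ x ∈ l, 2 ≤ ‖x‖) :
    ¬(Mlist l = 1 ∨ Mlist l = -1) := by
  obtain ⟨x, l, rfl⟩ := List.exists_cons_of_ne_nil hne
  have h01 : Mlist (x :: l) 0 1 = -Mlist l 0 0 := by
    simp [Mlist_cons, Matrix.mul_apply, Fin.sum_univ_two, matE]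
  have hle := (norm_Mlist_zero_one_lt fun y hy => hl y (List.mem_cons_of_mem x hy)).2
  rintro (h | h) <;> rw [h] at h01 <;>
    linarith [show ‖Mlist l 0 0‖ = 0 by simpa using h01]

theorem length_oplus {a b : List ℂ} (ha : 2 ≤ a.length) (hb : 2 ≤ b.length) :
    (oplus a b).length = a.length + b.length - 2 := by
  simp only [oplus, List.length_cons, List.length_append, List.length_dropLast, List.length_tail]
  omega

theorem CyclicEquiv.length_eq {a b : List ℂ} (h : CyclicEquiv a b) : a.length = b.length := by
  rcases h with ⟨k, rfl⟩ | ⟨k, rfl⟩ <;> simp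

theorem irreducibleQuiddity_of_length_eq_four {R : Set ℂ}
    (h3 : ∀ x y z, ¬IsQuiddity R [x, y, z]) {c : List ℂ} (hc : IsQuiddity R c)
    (h4 : c.length = 4) : IrreducibleQuiddity R c := by
  refine ⟨hc, by omega, ?_⟩
  rintro ⟨a, b, -, hb, ha3, hb3, hcab⟩
  have hlen := hcab.length_eq
  rw [length_oplus (by omega) (by omega)] at hlen
  obtain ⟨x, y, z, rfl⟩ := List.length_eq_three.mp (by omega : b.length = 3)
  exact h3 x y z hb

theorem List.exists_eq_cons_append_pair {α : Type*} {l : List α} (h : 3 ≤ l.length) :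
    ∃ x mid y t, l = x :: (mid ++ [y, t]) := by
  obtain ⟨x, l, rfl⟩ := List.exists_cons_of_length_pos (by omega : 0 < l.length)
  rcases l.eq_nil_or_concat' with rfl | ⟨l, t, rfl⟩
  · simp at h
  rcases l.eq_nil_or_concat' with rfl | ⟨mid, y, rfl⟩
  · simp at h
  exact ⟨x, mid, y, t, by simp⟩

theorem oplus_cons_append_zero (x y t : ℂ) (mid : List ℂ) :
    oplus ((x + t) :: (mid ++ [y])) [0, t, 0, -t] = x :: (mid ++ [y, t, 0]) := by
  simp [oplus, List.getLast?_cons]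

theorem reducibleQuiddity_of_zero_mem (R : AddSubgroup ℂ) {c : List ℂ} (hmem : ∀ x ∈ c, x ∈ R)
    (hlen : 5 ≤ c.length) (h0 : (0 : ℂ) ∈ c) : ReducibleQuiddity R c := by
  obtain ⟨s, u, rfl⟩ := List.append_of_mem h0
  have hrot : (s ++ 0 :: u).rotate (s.length + 1) = u ++ s ++ [0] := by
    rw [show s ++ 0 :: u = s ++ [0] ++ u by simp, show s.length + 1 = (s ++ [0]).length by simp,
      List.rotate_append_length_eq, List.append_assoc]
  obtain ⟨x, mid, y, t, hus⟩ :=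
    List.exists_eq_cons_append_pair (l := u ++ s) (by simp at hlen ⊢; omega)
  have hR : ∀ z ∈ x :: (mid ++ [y, t]), z ∈ R := by
    rw [← hus]
    intro z hz
    exact hmem z (by simp at hz ⊢; tauto)
  have ht : t ∈ R := hR t (by simp)
  refine ⟨(x + t) :: (mid ++ [y]), [0, t, 0, -t], ?_, ⟨by simp, ?_, ?_⟩, ?_, by simp, ?_⟩
  · intro z hz
    rcases List.mem_cons.mp hz with rfl | hz
    · exact add_mem (hR x (by simp)) ht
    · exact hR z (by simp at hz ⊢; tauto)
  · simp [ht]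
  · exact Or.inl (Mlist_four_eq_one_iff.mpr (Or.inl ⟨rfl, rfl, rfl⟩))
  · have := congrArg List.length hus
    simp at hlen this ⊢
    omega
  · left
    exact ⟨s.length + 1, by rw [oplus_cons_append_zero, hrot, hus]; simp⟩

theorem isConjRoot_of_aeval_eq_zero_of_irreducible {K A : Type*} [Field K] [Ring A] [IsDomain A]
    [Algebra K A] {p : K[X]} (hp : Irreducible p) {x y : A} (hx : aeval x p = 0)
    (hy : aeval y p = 0) : IsConjRoot K x y :=
  (minpoly.eq_of_irreducible hp hx).symm.trans (minpoly.eq_of_irreducible hp hy)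

theorem Mlist_map_intCast_mul_of_isConjRoot {u v : ℂ} (hu : IsIntegral ℚ u)
    (huv : IsConjRoot ℚ u v) {ks : List ℤ} {n : ℤ}
    (h : Mlist (ks.map fun k : ℤ => (k : ℂ) * u) = n) :
    Mlist (ks.map fun k : ℤ => (k : ℂ) * v) = n := by
  have := Fact.mk (minpoly.irreducible hu)
  let σ (x : ℂ) (hx : aeval x (minpoly ℚ u) = 0) : AdjoinRoot (minpoly ℚ u) →+* ℂ :=
    AdjoinRoot.lift (algebraMap ℚ ℂ) x (by rwa [aeval_def] at hx)
  let l := ks.map fun k : ℤ => (k : AdjoinRoot (minpoly ℚ u)) * AdjoinRoot.root (minpoly ℚ u)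
  have hσ (x : ℂ) (hx) :
      Mlist (ks.map fun k : ℤ => (k : ℂ) * x) = (σ x hx).mapMatrix (quiddityMatrix l) := by
    rw [RingHom.mapMatrix_quiddityMatrix, Mlist_eq_quiddityMatrix]
    simp [l, σ, Function.comp_def]
  have hσu := minpoly.aeval ℚ u
  have hl : quiddityMatrix l = n :=
    Matrix.map_injective (σ u hσu).injective (by
      change (σ u hσu).mapMatrix (quiddityMatrix l) = (σ u hσu).mapMatrix n
      rw [← hσ u hσu, h, map_intCast])
  rw [hσ v huv.aeval_eq_zero, hl, map_intCast]

theorem Mlist_map_intCast_mul_eq_of_isConjRoot {u v : ℂ} (hu : IsIntegral ℚ u)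
    (huv : IsConjRoot ℚ u v) {ks : List ℤ}
    (h : Mlist (ks.map fun k : ℤ => (k : ℂ) * u) = 1 ∨
      Mlist (ks.map fun k : ℤ => (k : ℂ) * u) = -1) :
    Mlist (ks.map fun k : ℤ => (k : ℂ) * v) = Mlist (ks.map fun k : ℤ => (k : ℂ) * u) := by
  rcases h with h | h <;> rw [h]
  · exact_mod_cast Mlist_map_intCast_mul_of_isConjRoot hu huv (n := 1) (by exact_mod_cast h)
  · exact_mod_cast Mlist_map_intCast_mul_of_isConjRoot hu huv (n := -1) (by exact_mod_cast h)

theorem subgroupGen_eq_range (w : ℂ) : subgroupGen w = Set.range fun k : ℤ => (k : ℂ) * w := by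
  ext x
  exact ⟨fun ⟨k, hk⟩ => ⟨k, hk.symm⟩, fun ⟨k, hk⟩ => ⟨k, hk.symm⟩⟩

theorem subgroupGen_eq_zmultiples (w : ℂ) : subgroupGen w = AddSubgroup.zmultiples w := by
  ext x
  simp [subgroupGen, AddSubgroup.mem_zmultiples_iff, eq_comm]

theorem exists_eq_map_of_forall_mem_subgroupGen {w : ℂ} {c : List ℂ}
    (hc : ∀ x ∈ c, x ∈ subgroupGen w) : ∃ ks : List ℤ, ks.map (fun k : ℤ => (k : ℂ) * w) = c := by
  rw [subgroupGen_eq_range] at hc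
  rwa [← Set.mem_range, Set.range_list_map]

theorem intCast_mul_eq_zero_or_two_le_norm {v : ℂ} (hv : 2 ≤ ‖v‖) (k : ℤ) :
    (k : ℂ) * v = 0 ∨ 2 ≤ ‖(k : ℂ) * v‖ := by
  rcases eq_or_ne k 0 with rfl | hk
  · simp
  · right
    have : (1 : ℝ) ≤ |(k : ℝ)| := by exact_mod_cast Int.one_le_abs hk
    rw [norm_mul, Complex.norm_intCast]
    nlinarith

section Conjugate

variable {w v : ℂ}

theorem zero_mem_of_isQuiddity_subgroupGen (hw : IsIntegral ℚ w) (hwv : IsConjRoot ℚ w v)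
    (hv : 2 ≤ ‖v‖) {c : List ℂ} (hc : IsQuiddity (subgroupGen w) c) : (0 : ℂ) ∈ c := by
  obtain ⟨hne, hmem, hM⟩ := hc
  obtain ⟨ks, rfl⟩ := exists_eq_map_of_forall_mem_subgroupGen hmem
  by_contra h0
  refine Mlist_ne_one_of_two_le_norm (l := ks.map fun k : ℤ => (k : ℂ) * v) (by simpa using hne)
    ?_ (Mlist_map_intCast_mul_eq_of_isConjRoot hw hwv hM ▸ hM)
  simp only [List.mem_map]
  rintro _ ⟨k, hk, rfl⟩
  refine (intCast_mul_eq_zero_or_two_le_norm hv k).resolve_left fun hkv => h0 ?_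
  have hk0 : k = 0 := by simpa [norm_pos_iff.mp (by linarith : 0 < ‖v‖)] using hkv
  exact List.mem_map.mpr ⟨k, hk, by simp [hk0]⟩

theorem not_isQuiddity_subgroupGen_three (hw : IsIntegral ℚ w) (hwv : IsConjRoot ℚ w v)
    (hv : 2 ≤ ‖v‖) (x y z : ℂ) : ¬IsQuiddity (subgroupGen w) [x, y, z] := by
  rintro ⟨-, hmem, hM⟩
  obtain ⟨a, rfl⟩ := hmem x (by simp)
  obtain ⟨b, rfl⟩ := hmem y (by simp)
  obtain ⟨c, rfl⟩ := hmem z (by simp)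
  have hM' := Mlist_map_intCast_mul_eq_of_isConjRoot (ks := [a, b, c]) hw hwv hM
  have hb := eq_one_or_eq_neg_one_of_Mlist_three (hM' ▸ hM)
  rcases intCast_mul_eq_zero_or_two_le_norm hv b with h | h <;>
    rcases hb with hb | hb <;> norm_num [hb] at h

theorem Mlist_eq_one_of_isQuiddity_subgroupGen_four (hw : IsIntegral ℚ w) (hwv : IsConjRoot ℚ w v)
    (hv : 2 ≤ ‖v‖) {x y z t : ℂ} (hc : IsQuiddity (subgroupGen w) [x, y, z, t]) :
    Mlist [x, y, z, t] = 1 := by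
  obtain ⟨-, hmem, hM⟩ := hc
  refine hM.resolve_right fun h => ?_
  obtain ⟨a, rfl⟩ := hmem x (by simp)
  obtain ⟨b, rfl⟩ := hmem y (by simp)
  obtain ⟨c, rfl⟩ := hmem z (by simp)
  obtain ⟨d, rfl⟩ := hmem t (by simp)
  have hM' := Mlist_map_intCast_mul_eq_of_isConjRoot (ks := [a, b, c, d]) hw hwv hM
  have h2 := mul_eq_two_of_Mlist_four_eq_neg_one (hM'.trans h)
  rcases intCast_mul_eq_zero_or_two_le_norm hv b with hb | hb
  · simp [hb] at h2
  rcases intCast_mul_eq_zero_or_two_le_norm hv c with hc | hc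
  · simp [hc] at h2
  have := congrArg norm h2
  rw [norm_mul, Complex.norm_ofNat] at this
  nlinarith

theorem isQuiddity_subgroupGen_four_iff (hw : IsIntegral ℚ w)
    (hwv : IsConjRoot ℚ w v) (hv : 2 ≤ ‖v‖) {x y z t : ℂ} :
    IsQuiddity (subgroupGen w) [x, y, z, t] ↔
      (∃ k : ℤ, [x, y, z, t] = [0, (k : ℂ) * w, 0, -((k : ℂ) * w)]) ∨
        ∃ k : ℤ, [x, y, z, t] = [(k : ℂ) * w, 0, -((k : ℂ) * w), 0] := by
  constructor
  · intro hc
    rcases Mlist_four_eq_one_iff.mp (Mlist_eq_one_of_isQuiddity_subgroupGen_four hw hwv hv hc) with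
      ⟨rfl, rfl, rfl⟩ | ⟨rfl, rfl, rfl⟩
    · obtain ⟨k, rfl⟩ := hc.2.1 y (by simp)
      exact Or.inl ⟨k, rfl⟩
    · obtain ⟨k, rfl⟩ := hc.2.1 x (by simp)
      exact Or.inr ⟨k, rfl⟩
  · have hneg (k : ℤ) : -((k : ℂ) * w) ∈ subgroupGen w := ⟨-k, by push_cast; ring⟩
    have hmul (k : ℤ) : (k : ℂ) * w ∈ subgroupGen w := ⟨k, rfl⟩
    have hzero : (0 : ℂ) ∈ subgroupGen w := ⟨0, by simp⟩
    rintro (⟨k, h⟩ | ⟨k, h⟩) <;> rw [h] <;>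
      refine ⟨by simp, by simp [hneg, hmul, hzero], Or.inl (Mlist_four_eq_one_iff.mpr ?_)⟩ <;>
      simp

end Conjugate

theorem one_lt_abs_coeff_zero {f : ℤ[X]} (hf : f.Monic) (hdeg : f.natDegree ≠ 0)
    (hroots : ∀ z : ℂ, aeval z f = 0 → 1 < ‖z‖) : 1 < |f.coeff 0| := by
  set F := f.map (algebraMap ℤ ℂ)
  have hF : F.Monic := hf.map _
  have hsplit : F.Splits := IsAlgClosed.splits F
  have hne : F.roots ≠ 0 := by
    rw [← Multiset.card_pos, ← hsplit.natDegree_eq_card_roots, hf.natDegree_map]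
    exact Nat.pos_of_ne_zero hdeg
  have hprod : 1 < ‖F.roots.prod‖ :=
    Multiset.prod_induction_nonempty (fun x => 1 < ‖x‖)
      (fun a b ha hb => by rw [norm_mul]; exact one_lt_mul_of_lt_of_le ha hb.le) hne
      (fun z hz => hroots z (by rw [← eval_map_algebraMap]; exact (mem_roots hF.ne_zero).mp hz))
  have hcoeff := hsplit.coeff_zero_eq_prod_roots_of_monic hF
  rw [coeff_map] at hcoeff
  have := congrArg norm hcoeff
  rw [norm_mul, norm_pow, norm_neg, norm_one, one_pow, one_mul, algebraMap_int_eq,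
    eq_intCast, Complex.norm_intCast] at this
  exact_mod_cast this ▸ hprod

noncomputable def septic : ℤ[X] := X ^ 7 + 5 * X ^ 6 + 2 * X ^ 3 - X ^ 2 + X + 11

theorem aeval_septic {A : Type*} [CommRing A] (z : A) :
    aeval z septic = z ^ 7 + 5 * z ^ 6 + 2 * z ^ 3 - z ^ 2 + z + 11 := by
  simp [septic, map_ofNat]

theorem one_lt_norm_of_aeval_septic {z : ℂ} (hz : aeval z septic = 0) : 1 < ‖z‖ := by
  rw [aeval_septic] at hz
  by_contra! h
  have hpow (n : ℕ) : ‖z‖ ^ n ≤ 1 := pow_le_one₀ (norm_nonneg z) h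
  have : ‖(11 : ℂ)‖ ≤ 10 := calc
    ‖(11 : ℂ)‖ = ‖z ^ 7 + 5 * z ^ 6 + 2 * z ^ 3 - z ^ 2 + z‖ := by
      rw [← norm_neg]; congr 1; linear_combination -hz
    _ ≤ ‖z‖ ^ 7 + 5 * ‖z‖ ^ 6 + 2 * ‖z‖ ^ 3 + ‖z‖ ^ 2 + ‖z‖ := by
      have h1 := norm_add_le (z ^ 7 + 5 * z ^ 6 + 2 * z ^ 3 - z ^ 2) z
      have h2 := norm_sub_le (z ^ 7 + 5 * z ^ 6 + 2 * z ^ 3) (z ^ 2)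
      have h3 := norm_add_le (z ^ 7 + 5 * z ^ 6) (2 * z ^ 3)
      have h4 := norm_add_le (z ^ 7) (5 * z ^ 6)
      simp only [norm_mul, norm_pow, Complex.norm_ofNat] at h1 h2 h3 h4 ⊢
      linarith
    _ ≤ 10 := by linarith [hpow 7, hpow 6, hpow 3, hpow 2]
  norm_num at this

theorem septic_monic : septic.Monic := by
  unfold septic
  monicity!

theorem septic_irreducible : Irreducible septic := by
  have hcoeff : septic.coeff 0 = 11 := by simp [septic]
  refine septic_monic.irreducible_iff_natDegree.mpr ⟨fun h => by simp [h] at hcoeff, ?_⟩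
  intro f g hf hg hfg
  by_contra! hdeg
  have hroots {q : ℤ[X]} (hq : q ∣ septic) (z : ℂ) (hz : aeval z q = 0) : 1 < ‖z‖ := by
    obtain ⟨r, hr⟩ := hq
    exact one_lt_norm_of_aeval_septic (by rw [hr, map_mul, hz, zero_mul])
  have hf0 := one_lt_abs_coeff_zero hf hdeg.1 (hroots (hfg ▸ dvd_mul_right f g))
  have hg0 := one_lt_abs_coeff_zero hg hdeg.2 (hroots (hfg ▸ dvd_mul_left g f))
  have h11 : (11 : ℤ) = f.coeff 0 * g.coeff 0 := by rw [← mul_coeff_zero, hfg, hcoeff]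
  have hprime : Irreducible (11 : ℤ) := (Int.prime_iff_natAbs_prime.mpr (by norm_num)).irreducible
  rcases hprime.isUnit_or_isUnit h11 with h | h <;> rw [Int.isUnit_iff_abs_eq] at h <;> omega

theorem exists_aeval_septic_eq_zero_le_neg_two : ∃ v : ℝ, v ≤ -2 ∧ aeval (v : ℂ) septic = 0 := by
  have hcont : ContinuousOn (fun x : ℝ => aeval x septic) (Set.Icc (-6) (-2)) :=
    (Polynomial.continuous_aeval septic).continuousOn
  obtain ⟨v, hv, hv0⟩ := intermediate_value_Icc (by norm_num) hcont
    (show (0 : ℝ) ∈ Set.Icc _ _ by simp only [aeval_septic]; norm_num)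
  refine ⟨v, hv.2, ?_⟩
  simp only [aeval_septic] at hv0 ⊢
  exact_mod_cast hv0

theorem exists_isConjRoot_two_le_norm_of_aeval_septic {w : ℂ} (hw : aeval w septic = 0) :
    IsIntegral ℚ w ∧ ∃ v : ℂ, IsConjRoot ℚ w v ∧ 2 ≤ ‖v‖ := by
  have hirr : Irreducible (septic.map (algebraMap ℤ ℚ)) :=
    septic_monic.irreducible_iff_irreducible_map_fraction_map.mp septic_irreducible
  have hwp : aeval w (septic.map (algebraMap ℤ ℚ)) = 0 := by rwa [aeval_map_algebraMap]
  obtain ⟨v, hv, hvp⟩ := exists_aeval_septic_eq_zero_le_neg_two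
  refine ⟨IsAlgebraic.isIntegral ⟨_, hirr.ne_zero, hwp⟩, v,
    isConjRoot_of_aeval_eq_zero_of_irreducible hirr hwp (by rwa [aeval_map_algebraMap]), ?_⟩
  rw [Complex.norm_real, Real.norm_eq_abs, abs_of_neg (by linarith)]
  linarith

theorem stmt10 (w : ℂ)
    (hw : w ^ 7 + 5 * w ^ 6 + 2 * w ^ 3 - w ^ 2 + w + 11 = 0) :
    {c : List ℂ | IrreducibleQuiddity (subgroupGen w) c} =
      {c : List ℂ | ∃ k : ℤ, c = [0, (k : ℂ) * w, 0, -((k : ℂ) * w)]} ∪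
      {c : List ℂ | ∃ k : ℤ, c = [(k : ℂ) * w, 0, -((k : ℂ) * w), 0]} := by
  obtain ⟨hint, v, hwv, hv⟩ :=
    exists_isConjRoot_two_le_norm_of_aeval_septic (by rwa [aeval_septic])
  have h3 := not_isQuiddity_subgroupGen_three hint hwv hv
  ext c
  simp only [Set.mem_ofPred_eq, Set.mem_union]
  constructor
  · rintro ⟨hc, hlen, hred⟩
    rcases (by omega : c.length = 3 ∨ c.length = 4 ∨ 5 ≤ c.length) with h | h | h
    · obtain ⟨x, y, z, rfl⟩ := List.length_eq_three.mp h
      exact (h3 x y z hc).elim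
    · obtain ⟨x, y, z, t, rfl⟩ := List.length_eq_four.mp h
      exact (isQuiddity_subgroupGen_four_iff hint hwv hv).mp hc
    · have h0 := zero_mem_of_isQuiddity_subgroupGen hint hwv hv hc
      rw [subgroupGen_eq_zmultiples] at hc hred
      exact (hred (reducibleQuiddity_of_zero_mem _ hc.2.1 h h0)).elim
  · intro hc
    have h4 : c.length = 4 := by rcases hc with ⟨k, rfl⟩ | ⟨k, rfl⟩ <;> rfl
    obtain ⟨x, y, z, t, rfl⟩ := List.length_eq_four.mp h4
    exact irreducibleQuiddity_of_length_eq_four h3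
      ((isQuiddity_subgroupGen_four_iff hint hwv hv).mpr hc) h4
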